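/- Let z be a real number that is not zero and not a negative integer. Then the digamma function satisfies ψ(z) = −1/z − γ + (z/(1+z)) · ∑_{m=0}^{∞} (1)_m (1)_m (1+z)_m / ((2)_m (2+z)_m · m!), where the series on the right converges. -/

import Mathlib

open scoped Nat

/-- Pochhammer symbol (rising factorial) `(x)_k` for a real number `x`. -/
noncomputable def poch (x : ℝ) (k : ℕ) : ℝ := (ascPochhammer ℝ k).eval x

/-- The digamma function `ψ = Γ'/Γ` on the reals. -/
noncomputable def digamma (z : ℝ) : ℝ := deriv Real.Gamma z / Real.Gamma z

/-!
Since `(1)_m = m!`, `(2)_m = (m+1)!` and `(1+z)_m (1+z+m) = (1+z) (2+z)_m`, the `m`-th term of the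
series is `(1+z)/((m+1)(m+1+z)) = ((1+z)/z) (1/(m+1) - 1/(m+1+z))`. So the theorem is the classical
expansion `ψ(w) + γ = ∑ (1/(m+1) - 1/(m+w))` at `w = 1+z`, combined with
`ψ(z+1) = ψ(z) + 1/z`. By the recurrence, the partial sums of that expansion are
`H_N - ψ(w+N) + ψ(w)`. Log-convexity of `Γ` squeezes `ψ(w+N)` between `log(w+N-1)` and
`log(w+N)`, so `ψ(w+N) - log N → 0`, while `H_N - log N → γ`.
-/

open Real Filter Topology Asymptotics Finset

lemma poch_succ_right (x : ℝ) (n : ℕ) : poch x (n + 1) = poch x n * (x + n) :=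
  ascPochhammer_succ_eval n x

lemma poch_succ_left (x : ℝ) (n : ℕ) : poch x (n + 1) = x * poch (x + 1) n := by
  simp [poch, ascPochhammer_succ_left, add_comm]

lemma poch_one (n : ℕ) : poch 1 n = n ! := ascPochhammer_eval_one ℝ n

lemma poch_two (n : ℕ) : poch 2 n = (n + 1)! := by
  rw [← poch_one, poch_succ_left, one_mul, one_add_one_eq_two]

lemma poch_ne_zero {x : ℝ} (hx : ∀ k : ℕ, x ≠ -k) (n : ℕ) : poch x n ≠ 0 := by
  rw [poch, Ne, ascPochhammer_eval_eq_zero_iff]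
  rintro ⟨k, -, hk⟩
  exact hx k (by linarith)

lemma summable_inv_add_one_sub_inv_add (w : ℝ) :
    Summable fun m : ℕ => ((m : ℝ) + 1)⁻¹ - ((m : ℝ) + w)⁻¹ := by
  have hequiv (c : ℝ) : (fun m : ℕ => (m : ℝ) + c) ~[atTop] fun m => (m : ℝ) :=
    IsEquivalent.refl.add_const_of_norm_tendsto_atTop
      (tendsto_norm_atTop_atTop.comp tendsto_natCast_atTop_atTop)
  have hprod : (fun m : ℕ => (((m : ℝ) + 1) * ((m : ℝ) + w))⁻¹) =O[atTop]
      fun m => ((m : ℝ) ^ 2)⁻¹ := by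
    refine ((hequiv 1).mul (hequiv w)).inv.isBigO.congr (fun _ => rfl) fun m => ?_
    simp [sq]
  refine summable_of_isBigO_nat' (Real.summable_nat_pow_inv.mpr one_lt_two)
    ((hprod.const_mul_left (w - 1)).congr' ?_ EventuallyEq.rfl)
  filter_upwards [eventually_gt_atTop ⌈-w⌉₊] with m hm
  have hmw : (m : ℝ) + w ≠ 0 := by
    have := Nat.lt_of_ceil_lt hm
    linarith
  field_simp
  ring

lemma digamma_add_one {w : ℝ} (hw : ∀ n : ℕ, w ≠ -n) : digamma (w + 1) = digamma w + w⁻¹ := by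
  have hw0 : w ≠ 0 := by simpa using hw 0
  have hderiv : deriv Gamma (w + 1) = Gamma w + w * deriv Gamma w := by
    have hloc : (fun x => Gamma (x + 1)) =ᶠ[𝓝 w] fun x => x * Gamma x :=
      (eventually_ne_nhds hw0).mono fun x hx => Gamma_add_one hx
    rw [← deriv_comp_add_const, hloc.deriv_eq]
    simp [differentiableAt_Gamma hw]
  rw [digamma, digamma, hderiv, Gamma_add_one hw0]
  field_simp [Gamma_ne_zero hw]
  ring

lemma digamma_add_nat {w : ℝ} (hw : ∀ n : ℕ, w ≠ -n) (N : ℕ) :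
    digamma (w + N) = digamma w + ∑ k ∈ range N, (w + k)⁻¹ := by
  induction N with
  | zero => simp
  | succ N ih =>
    have hwN : ∀ n : ℕ, w + N ≠ -n := fun n h => hw (n + N) (by push_cast; linarith)
    rw [Nat.cast_succ, ← add_assoc, digamma_add_one hwN, ih, sum_range_succ, add_assoc]

lemma hasDerivAt_log_Gamma {x : ℝ} (hx : 0 < x) : HasDerivAt (log ∘ Gamma) (digamma x) x :=
  ((differentiableAt_Gamma fun n => by linarith [n.cast_nonneg (α := ℝ)]).hasDerivAt.log
    (Gamma_pos_of_pos hx).ne')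

lemma log_Gamma_add_one {x : ℝ} (hx : 0 < x) :
    (log ∘ Gamma) (x + 1) = (log ∘ Gamma) x + log x := by
  simp only [Function.comp_apply, Gamma_add_one hx.ne',
    log_mul hx.ne' (Gamma_pos_of_pos hx).ne', add_comm]

lemma digamma_le_log {x : ℝ} (hx : 0 < x) : digamma x ≤ log x := by
  have h := convexOn_log_Gamma.deriv_le_slope (x := x) (y := x + 1) hx
    (show 0 < x + 1 by positivity) (by linarith) (hasDerivAt_log_Gamma hx).differentiableAt
  rwa [(hasDerivAt_log_Gamma hx).deriv, slope_def_field, log_Gamma_add_one hx,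
    add_sub_cancel_left, add_sub_cancel_left, div_one] at h

lemma log_sub_one_le_digamma {x : ℝ} (hx : 1 < x) : log (x - 1) ≤ digamma x := by
  have hx1 : 0 < x - 1 := by linarith
  have h := convexOn_log_Gamma.slope_le_deriv (x := x - 1) (y := x) hx1
    (show 0 < x by positivity) (by linarith) (hasDerivAt_log_Gamma (by linarith)).differentiableAt
  have hrec := log_Gamma_add_one hx1
  rw [sub_add_cancel] at hrec
  rwa [(hasDerivAt_log_Gamma (by linarith)).deriv, slope_def_field, sub_sub_cancel, div_one,
    hrec, add_sub_cancel_left] at h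

lemma tendsto_digamma_add_nat_sub_log (w : ℝ) :
    Tendsto (fun N : ℕ => digamma (w + N) - log N) atTop (𝓝 0) := by
  have hlog (c : ℝ) : Tendsto (fun N : ℕ => log (N + c) - log N) atTop (𝓝 0) :=
    (tendsto_log_comp_add_sub_log c).comp tendsto_natCast_atTop_atTop
  have hlarge : ∀ᶠ N : ℕ in atTop, 1 < w + N := by
    filter_upwards [eventually_gt_atTop ⌈1 - w⌉₊] with N hN
    linarith [Nat.lt_of_ceil_lt hN]
  refine tendsto_of_tendsto_of_tendsto_of_le_of_le' (hlog (w - 1)) (hlog w) ?_ ?_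
  all_goals filter_upwards [hlarge] with N hN
  · have := log_sub_one_le_digamma hN
    rw [show w + N - 1 = N + (w - 1) by ring] at this
    linarith
  · have := digamma_le_log (zero_lt_one.trans hN)
    rw [add_comm w] at this ⊢
    linarith

lemma hasSum_digamma {w : ℝ} (hw : ∀ n : ℕ, w ≠ -n) :
    HasSum (fun m : ℕ => ((m : ℝ) + 1)⁻¹ - ((m : ℝ) + w)⁻¹)
      (digamma w + eulerMascheroniConstant) := by
  have hpartial (N : ℕ) : ∑ m ∈ range N, (((m : ℝ) + 1)⁻¹ - ((m : ℝ) + w)⁻¹) =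
      ((harmonic N : ℝ) - log N) - (digamma (w + N) - log N) + digamma w := by
    rw [digamma_add_nat hw, sum_sub_distrib]
    simp_rw [add_comm w]
    simp only [harmonic]
    push_cast
    ring
  have hlim := (tendsto_harmonic_sub_log.sub (tendsto_digamma_add_nat_sub_log w)).add_const
    (digamma w)
  rw [sub_zero, add_comm, ← funext hpartial] at hlim
  exact (summable_inv_add_one_sub_inv_add w).hasSum_iff_tendsto_nat.mpr hlim

lemma hypergeometric_term_eq {a : ℝ} (ha : ∀ n : ℕ, a ≠ -n) (m : ℕ) :
    poch 1 m * poch 1 m * poch a m / (poch 2 m * poch (a + 1) m * m !) =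
      a / ((m + 1) * (m + a)) := by
  have hsucc : a * poch (a + 1) m = poch a m * (a + m) := by
    rw [← poch_succ_right, poch_succ_left]
  have ham : (m : ℝ) + a ≠ 0 := fun h => ha m (by linarith)
  have hpoch : poch (a + 1) m ≠ 0 :=
    poch_ne_zero (fun n h => ha (n + 1) (by push_cast; linarith)) m
  rw [poch_one, poch_two, Nat.factorial_succ, div_eq_div_iff (by positivity) (by positivity)]
  push_cast
  linear_combination (-(m ! : ℝ) ^ 2 * ((m : ℝ) + 1)) * hsucc

lemma hasSum_hypergeometric {a : ℝ} (ha : ∀ n : ℕ, a ≠ -n) (ha1 : a ≠ 1) :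
    HasSum (fun m : ℕ => poch 1 m * poch 1 m * poch a m / (poch 2 m * poch (a + 1) m * m !))
      (a / (a - 1) * (digamma a + eulerMascheroniConstant)) := by
  refine ((hasSum_digamma ha).mul_left (a / (a - 1))).congr_fun fun m => ?_
  have ham : (m : ℝ) + a ≠ 0 := fun h => ha m (by linarith)
  rw [hypergeometric_term_eq ha]
  field_simp
  ring

/-- Hypergeometric representation of the digamma function:
`ψ(z) = -1/z - γ + (z/(1+z)) · ₃F₂(1,1,1+z; 2,2+z; 1)`
for `z` not zero nor a negative integer. -/
theorem digamma_hypergeometric (z : ℝ) (hz : ∀ n : ℕ, z ≠ -(n : ℝ)) :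
    Summable (fun m : ℕ =>
        poch 1 m * poch 1 m * poch (1 + z) m / (poch 2 m * poch (2 + z) m * (m)!)) ∧
      digamma z = -1 / z - Real.eulerMascheroniConstant +
        (z / (1 + z)) * ∑' m : ℕ,
          poch 1 m * poch 1 m * poch (1 + z) m / (poch 2 m * poch (2 + z) m * (m)!) := by
  have hz0 : z ≠ 0 := by simpa using hz 0
  have hz1 : z + 1 ≠ 0 := fun h => hz 1 (by push_cast; linarith)
  have hsum := hasSum_hypergeometric (a := 1 + z) (fun n h => hz (n + 1) (by push_cast; linarith))
    (by simpa using hz0)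
  rw [show 1 + z + 1 = 2 + z by ring] at hsum
  refine ⟨hsum.summable, ?_⟩
  rw [hsum.tsum_eq, add_sub_cancel_left, add_comm 1 z, digamma_add_one hz]
  field_simp
  ring
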